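/- Let x = (x_1,…,x_m) and y = (y_1,…,y_m) be binary strings of the same length m that have the same k-deck. Then the concatenations xy = (x_1,…,x_m,y_1,…,y_m) and yx = (y_1,…,y_m,x_1,…,x_m) have the same (k+1)-deck. -/

import Mathlib

/-- The multiset of all `s`-gapped subsequences of a binary string (all lengths,
including the empty subsequence), counted with multiplicity over index choices:
consecutive chosen indices must differ by at least `s`. -/
def gappedSubseqs (s : ℕ) : List Bool → Multiset (List Bool)
  | [] => {[]}
  | a :: l => gappedSubseqs s l + (gappedSubseqs s (l.drop (s - 1))).map (a :: ·)
termination_by x => x.length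
decreasing_by
  · simp
  · simp only [List.length_drop, List.length_cons]; omega

/-- The `s`-gapped `k`-deck: all `s`-gapped subsequences of length between 1 and `k`. -/
def gDeck (s k : ℕ) (x : List Bool) : Multiset (List Bool) :=
  (gappedSubseqs s x).filter (fun w => 1 ≤ w.length ∧ w.length ≤ k)

/-- The exact `s`-gapped `k`-deck: all `s`-gapped subsequences of length exactly `k`. -/
def dDeck (s k : ℕ) (x : List Bool) : Multiset (List Bool) :=
  (gappedSubseqs s x).filter (fun w => w.length = k)

/-- The classical (ungapped) `k`-deck: the multiset of all length-`k` subsequences. -/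
def deck (k : ℕ) (x : List Bool) : Multiset (List Bool) :=
  (gappedSubseqs 1 x).filter (fun w => w.length = k)

/-- The gapped `k`-deck `B^(k)` (gap `2`). -/
def Bdeck (k : ℕ) (x : List Bool) : Multiset (List Bool) := gDeck 2 k x

/-- `B_L^(k)`: the gapped `k`-deck of the string punctured on the left. -/
def BLdeck (k : ℕ) (x : List Bool) : Multiset (List Bool) := Bdeck k x.tail

/-- `B_R^(k)`: the gapped `k`-deck of the string punctured on the right. -/
def BRdeck (k : ℕ) (x : List Bool) : Multiset (List Bool) := Bdeck k x.dropLast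

/-- `B_LR^(k)`: the gapped `k`-deck of the string punctured on both ends. -/
def BLRdeck (k : ℕ) (x : List Bool) : Multiset (List Bool) := Bdeck k x.tail.dropLast

/-- `S(k)`: the smallest positive `n` such that two distinct binary strings of
length `n` share the same `k`-deck. -/
noncomputable def Sval (k : ℕ) : ℕ :=
  sInf {n | 0 < n ∧ ∃ x y : List Bool, x.length = n ∧ y.length = n ∧ x ≠ y ∧
    deck k x = deck k y}

/-- `G(k)`: the smallest positive `n` such that two distinct binary strings of
length `n` share the same gapped `k`-deck. -/
noncomputable def Gval (k : ℕ) : ℕ :=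
  sInf {n | 0 < n ∧ ∃ x y : List Bool, x.length = n ∧ y.length = n ∧ x ≠ y ∧
    Bdeck k x = Bdeck k y}

/-- `G_s(k)`: the smallest positive `n` such that two distinct binary strings of
length `n` share the same `s`-gapped `k`-deck. -/
noncomputable def Gs (s k : ℕ) : ℕ :=
  sInf {n | 0 < n ∧ ∃ x y : List Bool, x.length = n ∧ y.length = n ∧ x ≠ y ∧
    gDeck s k x = gDeck s k y}

/-- `G*(k)`: the smallest positive `n` such that two distinct binary strings of
length `n` share the same gapped `k`-deck, also after puncturing on the left,
right and both sides. -/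
noncomputable def Gstar (k : ℕ) : ℕ :=
  sInf {n | 0 < n ∧ ∃ x y : List Bool, x.length = n ∧ y.length = n ∧ x ≠ y ∧
    Bdeck k x = Bdeck k y ∧ BLdeck k x = BLdeck k y ∧
    BRdeck k x = BRdeck k y ∧ BLRdeck k x = BLRdeck k y}

mutual
/-- Morse-Thue string `x^(k+1)` (index shifted: `mtX 0 = x^(1) = (0,1)`). -/
def mtX : ℕ → List Bool
  | 0 => [false, true]
  | k + 1 => mtX k ++ mtY k
/-- Morse-Thue string `y^(k+1)` (index shifted: `mtY 0 = y^(1) = (1,0)`). -/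
def mtY : ℕ → List Bool
  | 0 => [true, false]
  | k + 1 => mtY k ++ mtX k
end

mutual
/-- Padded Morse-Thue string `x^(k+1)` (index shifted: `px 0 = x^(1) = (0,0,1,0)`). -/
def px : ℕ → List Bool
  | 0 => [false, false, true, false]
  | k + 1 => [false] ++ px k ++ [false, false] ++ py k ++ [false]
/-- Padded Morse-Thue string `y^(k+1)` (index shifted: `py 0 = y^(1) = (0,1,0,0)`). -/
def py : ℕ → List Bool
  | 0 => [false, true, false, false]
  | k + 1 => [false] ++ py k ++ [false, false] ++ px k ++ [false]
end

/-- Interleaving `(z₁,x₁,z₂,x₂,…,z_{k-1},x_{k-1},z_k)` of `z` and `x`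
(used with `|z| = |x| + 1`). -/
def interleave : List Bool → List Bool → List Bool
  | z, [] => z
  | [], _ :: _ => []
  | a :: l, b :: m => a :: b :: interleave l m

/-- `N(w, p)`: the number of occurrences of the wildcard string `w`
(entries `none` are wildcards `J`, `some b` is a letter of `Γ = {X, Y}`)
as a subsequence of `p`, each wildcard matching either letter. -/
def Nw : List (Option Bool) → List Bool → ℕ
  | [], _ => 1
  | _ :: _, [] => 0
  | a :: w, b :: p =>
      Nw (a :: w) p + if a = none ∨ a = some b then Nw w p else 0

/-- `U_r(k)`: wildcard strings of length between `r` and `k` with exactly `r`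
non-wildcard symbols. -/
def Ur (r k : ℕ) : Set (List (Option Bool)) :=
  {w | r ≤ w.length ∧ w.length ≤ k ∧ w.countP (fun a => a.isSome) = r}

/-- `U(k₁, k₂) = U₁(k₁) ∪ U₂(k₂)`. -/
def Uset (k1 k2 : ℕ) : Set (List (Option Bool)) := Ur 1 k1 ∪ Ur 2 k2

/-- `p ∼^{U(k₁,k₂)} q`: `N(w,p) = N(w,q)` for all `w ∈ U(k₁,k₂)`. -/
def equivU (k1 k2 : ℕ) (p q : List Bool) : Prop :=
  ∀ w ∈ Uset k1 k2, Nw w p = Nw w q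

/-- `S_U(k₁,k₂)`: the smallest `m` for which two distinct strings
`p, q ∈ Γ^m` satisfy `p ∼^{U(k₁,k₂)} q`. -/
noncomputable def SU (k1 k2 : ℕ) : ℕ :=
  sInf {m | ∃ p q : List Bool, p.length = m ∧ q.length = m ∧ p ≠ q ∧
    equivU k1 k2 p q}

/-- `h_{x,y}(p)`: replace each letter of `p` (`false = X`, `true = Y`) by `x`
resp. `y` padded with one `0` at each end. -/
def hxy (x y : List Bool) (p : List Bool) : List Bool :=
  (p.map (fun b => [false] ++ (if b then y else x) ++ [false])).flatten

def occ (w l : List Bool) : ℕ := Multiset.count w (gappedSubseqs 1 l)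

lemma gapped1_nil : gappedSubseqs 1 [] = {[]} := by rw [gappedSubseqs]

lemma gapped1_cons (a : Bool) (l : List Bool) :
    gappedSubseqs 1 (a :: l) = gappedSubseqs 1 l + (gappedSubseqs 1 l).map (a :: ·) := by
  rw [gappedSubseqs]
  simp

lemma occ_nil (w : List Bool) : occ w [] = if w = [] then 1 else 0 := by
  simp [occ, gapped1_nil, Multiset.count_singleton]

lemma count_map_cons (a : Bool) (w : List Bool) (s : Multiset (List Bool)) :
    Multiset.count w (s.map (a :: ·)) =
      (match w with
      | [] => 0
      | b :: w' => if b = a then Multiset.count w' s else 0) := by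
  match w with
  | [] =>
    simp only [Multiset.count_eq_zero]
    intro h
    obtain ⟨u, _, hu⟩ := Multiset.mem_map.mp h
    exact List.cons_ne_nil _ _ hu
  | b :: w' =>
    by_cases hb : b = a
    · subst hb
      simp only [if_pos rfl]
      exact Multiset.count_map_eq_count' _ _ (fun u v h => by injection h) _
    · simp only [if_neg hb, Multiset.count_eq_zero]
      intro h
      obtain ⟨u, _, hu⟩ := Multiset.mem_map.mp h
      injection hu with h1 h2
      exact hb h1.symm

lemma occ_cons (w : List Bool) (a : Bool) (l : List Bool) :
    occ w (a :: l) = occ w l +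
      (match w with
      | [] => 0
      | b :: w' => if b = a then occ w' l else 0) := by
  unfold occ
  rw [gapped1_cons, Multiset.count_add, count_map_cons]

lemma occ_nil_left (l : List Bool) : occ [] l = 1 := by
  induction l with
  | nil => simp [occ_nil]
  | cons a l ih => rw [occ_cons]; simpa using ih

lemma occ_eq_zero (w l : List Bool) (h : l.length < w.length) : occ w l = 0 := by
  induction l generalizing w with
  | nil =>
    rw [occ_nil, if_neg]
    rintro rfl; simp at h
  | cons a l ih =>
    rw [occ_cons]
    match w with
    | [] => simp at h
    | b :: w' =>
      simp only [List.length_cons] at h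
      rw [ih (b :: w') (by simp only [List.length_cons]; omega)]
      simp only [Nat.zero_add]
      split <;> [exact ih w' (by omega); rfl]

lemma count_deck (w : List Bool) (k : ℕ) (l : List Bool) :
    Multiset.count w (deck k l) = if w.length = k then occ w l else 0 := by
  rw [deck, Multiset.count_filter]; rfl

lemma deck_zero (l : List Bool) : deck 0 l = {[]} := by
  induction l with
  | nil => simp [deck, gapped1_nil, Multiset.filter_singleton]
  | cons a l ih =>
    rw [deck, gapped1_cons, Multiset.filter_add, Multiset.filter_map]
    have : Multiset.filter ((fun w => w.length = 0) ∘ (a :: ·)) (gappedSubseqs 1 l) = 0 := by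
      simp [Multiset.filter_eq_nil]
    rw [this, Multiset.map_zero, add_zero]
    exact ih

lemma deck_succ_cons (k : ℕ) (a : Bool) (l : List Bool) :
    deck (k + 1) (a :: l) = deck (k + 1) l + (deck k l).map (a :: ·) := by
  rw [deck, gapped1_cons, Multiset.filter_add, Multiset.filter_map, deck, deck]
  congr 1
  congr 1
  ext u
  simp

lemma deck_succ_nil (k : ℕ) : deck (k + 1) [] = 0 := by
  rw [deck, gapped1_nil]
  simp [Multiset.filter_singleton]

lemma sum_occ_deck_zero (w : List Bool) (k : ℕ) (l : List Bool) (h : k < w.length) :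
    ((deck k l).map (occ w)).sum = 0 := by
  apply Multiset.sum_eq_zero
  intro n hn
  obtain ⟨u, hu, rfl⟩ := Multiset.mem_map.mp hn
  have hlen : u.length = k := by
    rw [deck] at hu
    exact (Multiset.mem_filter.mp hu).2
  exact occ_eq_zero _ _ (by omega)

lemma sum_occ_deck (l : List Bool) : ∀ (k : ℕ) (w : List Bool), w.length ≤ k →
    ((deck k l).map (occ w)).sum
      = occ w l * Nat.choose (l.length - w.length) (k - w.length) := by
  induction l with
  | nil =>
    intro k w hw
    cases k with
    | zero =>
      have : w = [] := List.length_eq_zero_iff.mp (Nat.le_zero.mp hw)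
      subst this
      simp [deck_zero, occ_nil]
    | succ k =>
      rw [deck_succ_nil]
      rcases List.eq_nil_or_concat w with rfl | h
      · simp [occ_nil_left]
      · rw [occ_nil, if_neg (by rintro rfl; obtain ⟨a,b,hab⟩ := h; simp at hab)]
        simp
  | cons a l ih =>
    intro k w hw
    cases k with
    | zero =>
      have : w = [] := List.length_eq_zero_iff.mp (Nat.le_zero.mp hw)
      subst this
      simp [deck_zero, occ_nil_left]
    | succ k =>
      rw [deck_succ_cons, Multiset.map_add, Multiset.sum_add, Multiset.map_map]
      match w with
      | [] =>
        have hmap : ((deck k l).map (occ [] ∘ (a :: ·))).sum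
            = ((deck k l).map (occ [])).sum := by
          apply congrArg
          apply Multiset.map_congr rfl
          intro u _
          have := occ_cons [] a u
          simpa using this
        rw [hmap, ih (k+1) [] (by simp), ih k [] (by simp)]
        simp only [List.length_nil, Nat.sub_zero, List.length_cons, occ_nil_left, one_mul]
        rw [Nat.choose_succ_succ, Nat.add_comm]
      | b :: w' =>
        have hmap : ((deck k l).map (occ (b :: w') ∘ (a :: ·))).sum
            = ((deck k l).map (occ (b :: w'))).sum +
              ((deck k l).map (fun u => if b = a then occ w' u else 0)).sum := by
          rw [← Multiset.sum_map_add]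
          apply congrArg
          apply Multiset.map_congr rfl
          intro u _
          have := occ_cons (b :: w') a u
          simpa using this
        rw [hmap]
        simp only [List.length_cons] at hw ⊢
        rw [occ_cons]
        rcases Nat.lt_or_ge (w'.length + 1) (k + 1) with hlt | hge
        · -- w'.length + 1 ≤ k
          have h1 : w'.length + 1 ≤ k := by omega
          rw [ih (k+1) (b :: w') (by simp; omega), ih k (b :: w') (by simp; omega)]
          simp only [List.length_cons]
          have hg : ((deck k l).map (fun u => if b = a then occ w' u else 0)).sum
              = if b = a then occ w' l * Nat.choose (l.length - w'.length) (k - w'.length) else 0 := by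
            split
            · exact ih k w' (by omega)
            · simp
          have harith1 : l.length + 1 - (w'.length + 1) = l.length - w'.length := by omega
          have harith2 : k + 1 - (w'.length + 1) = k - w'.length := by omega
          rw [hg, harith1, harith2]
          have hpascal : occ (b :: w') l * Nat.choose (l.length - (w'.length + 1)) (k - w'.length)
              + occ (b :: w') l * Nat.choose (l.length - (w'.length + 1)) (k - (w'.length + 1))
              = occ (b :: w') l * Nat.choose (l.length - w'.length) (k - w'.length) := by
            rcases Nat.lt_or_ge l.length (w'.length + 1) with hl | hl
            · rw [occ_eq_zero _ _ (by simpa using hl)]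
              simp
            · rw [← Nat.mul_add]
              congr 1
              have e1 : l.length - w'.length = (l.length - (w'.length + 1)) + 1 := by omega
              have e2 : k - w'.length = (k - (w'.length + 1)) + 1 := by omega
              rw [e1, e2, Nat.choose_succ_succ, Nat.add_comm]
          by_cases hba : b = a
          · simp only [if_pos hba]
            rw [Nat.add_mul, ← hpascal]
            ring
          · simp only [if_neg hba, Nat.add_zero, add_zero]
            rw [← hpascal]
        · -- w'.length + 1 = k + 1
          have hk : k = w'.length := by omega
          subst hk
          rw [ih (w'.length + 1) (b :: w') (by simp)]
          rw [sum_occ_deck_zero (b :: w') w'.length l (by simp)]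
          simp only [List.length_cons]
          have hg : ((deck w'.length l).map (fun u => if b = a then occ w' u else 0)).sum
              = if b = a then occ w' l * Nat.choose (l.length - w'.length) (w'.length - w'.length) else 0 := by
            split
            · exact ih w'.length w' le_rfl
            · simp
          rw [hg]
          simp only [Nat.sub_self, Nat.choose_zero_right, Nat.mul_one]
          split <;> ring

lemma occ_of_deck_eq {k : ℕ} {x y : List Bool} (h : deck k x = deck k y)
    (hlen : x.length = y.length) (hk : k ≤ x.length)
    (w : List Bool) (hw : w.length ≤ k) : occ w x = occ w y := by
  have h1 := sum_occ_deck x k w hw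
  have h2 := sum_occ_deck y k w hw
  rw [h, h2, ← hlen] at h1
  exact (Nat.eq_of_mul_eq_mul_right (Nat.choose_pos (by omega : k - w.length ≤ x.length - w.length)) h1).symm

lemma occ_append (q : List Bool) : ∀ (p w : List Bool),
    occ w (p ++ q)
      = ∑ i ∈ Finset.range (w.length + 1), occ (w.take i) p * occ (w.drop i) q := by
  intro p
  induction p with
  | nil =>
    intro w
    rw [List.nil_append, Finset.sum_eq_single 0]
    · simp [occ_nil_left]
    · intro i hi hne
      rw [occ_nil, if_neg, zero_mul]
      intro htake
      rcases List.take_eq_nil_iff.mp htake with h | h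
      · exact hne h
      · rw [h] at hi; simp at hi; omega
    · intro hmem
      exact absurd (Finset.mem_range.mpr (by omega)) hmem
  | cons a p' ih =>
    intro w
    rw [List.cons_append, occ_cons]
    have hterm : ∀ i, occ (w.take i) (a :: p') * occ (w.drop i) q
        = occ (w.take i) p' * occ (w.drop i) q +
          (match w.take i with
           | [] => 0
           | b :: v => if b = a then occ v p' else 0) * occ (w.drop i) q := by
      intro i
      rw [occ_cons, Nat.add_mul]
    have hsplit : (∑ i ∈ Finset.range (w.length + 1), occ (w.take i) (a :: p') * occ (w.drop i) q)
        = (∑ i ∈ Finset.range (w.length + 1), occ (w.take i) p' * occ (w.drop i) q)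
          + ∑ i ∈ Finset.range (w.length + 1),
              (match w.take i with
               | [] => 0
               | b :: v => if b = a then occ v p' else 0) * occ (w.drop i) q := by
      rw [← Finset.sum_add_distrib]
      exact Finset.sum_congr rfl fun i _ => hterm i
    rw [hsplit]
    congr 1
    · exact ih w
    · match w with
      | [] => simp
      | b :: w' =>
        rw [List.length_cons, Finset.sum_range_succ']
        simp only [List.take_zero, List.take_succ_cons, List.drop_succ_cons, List.drop_zero]
        by_cases hba : b = a
        · simp only [if_pos hba, zero_mul, add_zero]
          rw [ih w']
        · simp only [if_neg hba, zero_mul, add_zero]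
          simp

/-- If binary strings `x` and `y` of the same length `m` have the
same `k`-deck, then `xy` and `yx` have the same `(k+1)`-deck. -/
theorem stmt0 (k m : ℕ) (hk : 0 < k) (hkm : k ≤ m) (x y : List Bool)
    (hx : x.length = m) (hy : y.length = m) (h : deck k x = deck k y) :
    deck (k + 1) (x ++ y) = deck (k + 1) (y ++ x) := by
  have hlen : x.length = y.length := by omega
  have hocc : ∀ w : List Bool, w.length ≤ k → occ w x = occ w y :=
    fun w hw => occ_of_deck_eq h hlen (by omega) w hw
  refine Multiset.ext.mpr fun w => ?_
  rw [count_deck, count_deck]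
  by_cases hwl : w.length = k + 1
  · rw [if_pos hwl, if_pos hwl, occ_append, occ_append, hwl]
    have decomp : ∀ f : ℕ → ℕ, ∑ i ∈ Finset.range (k + 1 + 1), f i
        = (∑ i ∈ Finset.range k, f (i + 1)) + f 0 + f (k + 1) := by
      intro f
      rw [Finset.sum_range_succ, Finset.sum_range_succ']
    rw [decomp fun i => occ (w.take i) x * occ (w.drop i) y,
      decomp fun i => occ (w.take i) y * occ (w.drop i) x]
    have hmid : ∀ i ∈ Finset.range k,
        occ (w.take (i + 1)) x * occ (w.drop (i + 1)) y
          = occ (w.take (i + 1)) y * occ (w.drop (i + 1)) x := by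
      intro i hi
      rw [Finset.mem_range] at hi
      have ht : (w.take (i + 1)).length ≤ k := by
        rw [List.length_take]; omega
      have hd : (w.drop (i + 1)).length ≤ k := by
        rw [List.length_drop]; omega
      rw [hocc _ ht, hocc _ hd]
    rw [Finset.sum_congr rfl hmid]
    have h0 : w.take 0 = [] := List.take_zero (l := w)
    have hdrop0 : w.drop 0 = w := List.drop_zero (l := w)
    have htake : w.take (k + 1) = w := List.take_of_length_le (by omega)
    have hdrop : w.drop (k + 1) = [] := List.drop_eq_nil_of_le (by omega)
    rw [h0, hdrop0, htake, hdrop, occ_nil_left, occ_nil_left]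
    ring
  · rw [if_neg hwl, if_neg hwl]
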